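/- arXiv:2302.14388 — 3 statements merged into one kernel-verified Lean document; each statement's English description precedes it below -/
import Mathlib

section
/- In a partial matching on a simplicial complex, any directed cycle in the modified Hasse diagram (matched pairs oriented upward, unmatched cover relations downward) must alternate strictly between two adjacent dimensions, i.e., it has the form σ_1 ↘ τ_1 ↗ σ_2 ↘ τ_2 ↗ ⋯ ↗ σ_1 with all σ_i of dimension d+1 and all τ_i of dimension d. -/
variable {V : Type*} [DecidableEq V]

/-- `σ` is a facet (codimension-one face) of `τ`. -/
def IsFacet (σ τ : Finset V) : Prop := σ ⊆ τ ∧ τ.card = σ.card + 1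

/-- `M` is a partial matching on the simplicial complex `C`: matched pairs are
facet/cofacet pairs of simplices of `C`, and every simplex is matched with at most
one facet or cofacet. -/
structure IsPartialMatching (C : Set (Finset V)) (M : Finset V → Finset V → Prop) : Prop where
  mem_left : ∀ σ τ, M σ τ → σ ∈ C
  mem_right : ∀ σ τ, M σ τ → τ ∈ C
  facet : ∀ σ τ, M σ τ → IsFacet σ τ
  unique : ∀ σ τ₁ τ₂, (M σ τ₁ ∨ M τ₁ σ) → (M σ τ₂ ∨ M τ₂ σ) → τ₁ = τ₂

/-- One step of the modified Hasse diagram: either go up along a matched pair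
(`σ ↗ τ`), or go down along an unmatched cover relation (`σ ↘ τ`). -/
def MorseStep (C : Set (Finset V)) (M : Finset V → Finset V → Prop)
    (σ τ : Finset V) : Prop :=
  (σ ∈ C ∧ τ ∈ C) ∧ (M σ τ ∨ (IsFacet τ σ ∧ ¬ M τ σ))

/-!
Every step of the modified Hasse diagram changes the cardinality by exactly one, and two
matched steps `σ ↗ τ ↗ ρ` cannot follow each other, since `τ` would be matched with both
`σ` and `ρ`. Hence the cardinality never increases over two consecutive steps. Along a
cycle it is periodic, so it must in fact be constant over two steps; the cycle therefore
alternates between two adjacent cardinalities.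
-/

namespace Function.Periodic

theorem map_add_eq_of_map_add_le {α : Type*} [PartialOrder α] {f : ℕ → α} {k m : ℕ}
    (hf : Periodic f k) (hk : 0 < k) (hle : ∀ i, f (i + m) ≤ f i) (i : ℕ) :
    f (i + m) = f i := by
  have hanti : Antitone fun j => f (i + j * m) :=
    antitone_nat_of_succ_le fun j => by
      simpa only [Nat.succ_mul, add_assoc] using hle (i + j * m)
  refine le_antisymm (hle i) ?_
  calc f i = f (i + k * m) := by rw [mul_comm]; exact (hf.nat_mul m i).symm
    _ ≤ f (i + 1 * m) := hanti hk
    _ = f (i + m) := by rw [one_mul]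

theorem exists_alternating_of_two {f : ℕ → ℕ} (hf : Periodic f 2)
    (hstep : ∀ i, f (i + 1) = f i + 1 ∨ f i = f (i + 1) + 1) :
    ∃ d, ∀ i, (f i = d ∨ f i = d + 1) ∧ f i ≠ f (i + 1) := by
  have hpair : ∀ i, (f i = f 0 ∧ f (i + 1) = f 1) ∨ (f i = f 1 ∧ f (i + 1) = f 0) := by
    intro i
    induction i with
    | zero => exact Or.inl ⟨rfl, rfl⟩
    | succ n ih =>
      have : f (n + 1 + 1) = f n := hf n
      rcases ih with h | h
      · exact Or.inr ⟨h.2, by omega⟩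
      · exact Or.inl ⟨h.2, by omega⟩
  refine ⟨min (f 0) (f 1), fun i => ?_⟩
  have : f 1 = f 0 + 1 ∨ f 0 = f 1 + 1 := hstep 0
  rcases hpair i with h | h <;> omega

end Function.Periodic

section MorseStep

variable {α : Type*} {C : Set (Finset α)} {M : Finset α → Finset α → Prop} {σ τ ρ : Finset α}

theorem IsPartialMatching.not_rel_of_rel (hM : IsPartialMatching C M) (hστ : M σ τ) :
    ¬ M τ ρ := by
  intro hτρ
  obtain rfl := hM.unique τ σ ρ (Or.inr hστ) (Or.inl hτρ)
  have := (hM.facet _ _ hστ).2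
  have := (hM.facet _ _ hτρ).2
  omega

theorem MorseStep.card_eq_succ_or (hM : IsPartialMatching C M) (h : MorseStep C M σ τ) :
    τ.card = σ.card + 1 ∨ σ.card = τ.card + 1 := by
  rcases h.2 with hστ | ⟨hτσ, -⟩
  · exact Or.inl (hM.facet _ _ hστ).2
  · exact Or.inr hτσ.2

theorem MorseStep.card_le_of_morseStep (hM : IsPartialMatching C M) (h₁ : MorseStep C M σ τ)
    (h₂ : MorseStep C M τ ρ) : ρ.card ≤ σ.card := by
  rcases h₁.2 with hστ | ⟨hτσ, -⟩
  · rcases h₂.2 with hτρ | ⟨hρτ, -⟩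
    · exact absurd hτρ (hM.not_rel_of_rel hστ)
    · have := (hM.facet _ _ hστ).2
      have := hρτ.2
      omega
  · have := hτσ.2
    have := h₂.card_eq_succ_or hM
    omega

end MorseStep

/-- any directed cycle in the modified Hasse diagram of a partial
matching alternates strictly between two adjacent dimensions: there is `d` such
that every simplex on the cycle has cardinality `d` or `d+1`, and consecutive
simplices on the cycle have different cardinalities (so the cycle has the form
`σ₁ ↘ τ₁ ↗ σ₂ ↘ ⋯ ↗ σ₁` with the `σᵢ` of dimension `d+1` and the `τᵢ` of
dimension `d`). -/
theorem cycle_alternates_adjacent_dimensions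
    (C : Set (Finset V)) (M : Finset V → Finset V → Prop)
    (hM : IsPartialMatching C M)
    (p : ℕ → Finset V) (k : ℕ) (hk : 0 < k)
    (hstep : ∀ i, MorseStep C M (p i) (p (i + 1)))
    (hper : ∀ i, p (i + k) = p i) :
    ∃ d : ℕ, ∀ i, ((p i).card = d ∨ (p i).card = d + 1) ∧
      (p i).card ≠ (p (i + 1)).card := by
  have hper_card : Function.Periodic (fun i => (p i).card) k := fun i =>
    congrArg Finset.card (hper i)
  have hcard_two : Function.Periodic (fun i => (p i).card) 2 :=
    hper_card.map_add_eq_of_map_add_le hk fun i =>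
      (hstep i).card_le_of_morseStep hM (hstep (i + 1))
  exact hcard_two.exists_alternating_of_two fun i => (hstep i).card_eq_succ_or hM
end

section
/- Any triangulation (without additional vertices) of a convex polygon can be transformed into any other such triangulation by a finite sequence of diagonal flips, where a flip replaces a diagonal of a triangulated quadrilateral formed by two adjacent triangles with the other diagonal. -/
/-! Every triangulation can be flipped to the fan at vertex `0`, and flips are reversible.
If some diagonal avoids `0`, pick a vertex `j` not joined to `0` and the neighbours `a < j < b`
of `0` closest to it. Then `(a, b)` is a diagonal, the triangle beyond it has an apex `c`, and
flipping `(a, b)` inside the quadrilateral `0 a c b` to `(0, c)` removes one diagonal avoiding `0`. -/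

/-- `p` is a diagonal of a convex `n`-gon with vertices `0, 1, …, n-1` in cyclic
order: a pair `(i, j)` with `i + 2 ≤ j < n` which is not an edge of the polygon
(the pair `(0, n-1)` is the remaining boundary edge and is excluded). -/
def IsDiagonal (n : ℕ) (p : ℕ × ℕ) : Prop :=
  p.1 + 2 ≤ p.2 ∧ p.2 < n ∧ ¬(p.1 = 0 ∧ p.2 = n - 1)

/-- Two diagonals of the convex polygon cross (their interiors intersect). -/
def Crosses (p q : ℕ × ℕ) : Prop :=
  (p.1 < q.1 ∧ q.1 < p.2 ∧ p.2 < q.2) ∨ (q.1 < p.1 ∧ p.1 < q.2 ∧ q.2 < p.2)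

/-- A triangulation (without additional vertices) of a convex `n`-gon, identified
with its set of diagonals: a maximal set of pairwise noncrossing diagonals. -/
def IsTriangulation (n : ℕ) (D : Finset (ℕ × ℕ)) : Prop :=
  (∀ p ∈ D, IsDiagonal n p) ∧
  (∀ p ∈ D, ∀ q ∈ D, ¬ Crosses p q) ∧
  (∀ p, IsDiagonal n p → (∀ q ∈ D, ¬ Crosses p q) → p ∈ D)

/-- A diagonal flip: remove one diagonal of the triangulation (exposing the
quadrilateral formed by the two adjacent triangles) and insert the other diagonal
of that quadrilateral, i.e. the unique other diagonal producing a triangulation. -/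
def Flip (n : ℕ) (D D' : Finset (ℕ × ℕ)) : Prop :=
  IsTriangulation n D ∧ IsTriangulation n D' ∧
  ∃ d d', d ∈ D ∧ d' ∉ D ∧ D' = insert d' (D.erase d)

def fan (n : ℕ) : Finset (ℕ × ℕ) := (Finset.Ico 2 (n - 1)).image fun j => (0, j)

def IsBoundaryEdge (n : ℕ) (p : ℕ × ℕ) : Prop :=
  p.1 + 1 = p.2 ∨ p = (0, n - 1)

def IsEdge (n : ℕ) (D : Finset (ℕ × ℕ)) (p : ℕ × ℕ) : Prop :=
  p ∈ D ∨ IsBoundaryEdge n p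

theorem crosses_comm {p q : ℕ × ℕ} : Crosses p q ↔ Crosses q p := by
  unfold Crosses
  tauto

theorem not_crosses_of_isBoundaryEdge {n : ℕ} {p s : ℕ × ℕ} (hp : p.2 < n)
    (hs : IsBoundaryEdge n s) : ¬Crosses p s := by
  obtain ⟨u, v⟩ := p
  obtain ⟨x, y⟩ := s
  simp only [IsBoundaryEdge, Crosses, Prod.mk.injEq] at *
  omega

theorem not_crosses_of_isEdge {n : ℕ} {S : Finset (ℕ × ℕ)} {p s : ℕ × ℕ} (hp : p.2 < n)
    (hS : ∀ q ∈ S, ¬Crosses p q) (hs : IsEdge n S s) : ¬Crosses p s :=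
  hs.elim (hS s) (not_crosses_of_isBoundaryEdge hp)

theorem IsEdge.insert_erase {n : ℕ} {D : Finset (ℕ × ℕ)} {s d : ℕ × ℕ} (hs : IsEdge n D s)
    (hsd : s ≠ d) (d' : ℕ × ℕ) : IsEdge n (insert d' (D.erase d)) s :=
  hs.imp (fun h => Finset.mem_insert_of_mem (Finset.mem_erase.mpr ⟨hsd, h⟩)) id

theorem eq_of_crosses_of_not_crosses_sides {i j k l : ℕ} {p : ℕ × ℕ} (hij : i < j)
    (hjk : j < k) (hkl : k < l) (h₁ : ¬Crosses p (i, j)) (h₂ : ¬Crosses p (j, k))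
    (h₃ : ¬Crosses p (k, l)) (h₄ : ¬Crosses p (i, l)) :
    (Crosses p (i, k) → p = (j, l)) ∧ (Crosses p (j, l) → p = (i, k)) := by
  obtain ⟨u, v⟩ := p
  simp only [Crosses, Prod.mk.injEq] at *
  omega

theorem exists_consecutive_around {P : ℕ → Prop} [DecidablePred P] {lo j hi : ℕ}
    (hlo : P lo) (hhi : P hi) (hloj : lo ≤ j) (hjhi : j ≤ hi) (hj : ¬P j) :
    ∃ a b, P a ∧ P b ∧ lo ≤ a ∧ a < j ∧ j < b ∧ b ≤ hi ∧ ∀ m, a < m → m < b → ¬P m := by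
  have hex : ∃ b, j ≤ b ∧ P b := ⟨hi, hjhi, hhi⟩
  have ha : P (Nat.findGreatest P j) := Nat.findGreatest_spec hloj hlo
  have hb : P (Nat.find hex) := (Nat.find_spec hex).2
  have haj : Nat.findGreatest P j < j :=
    (Nat.findGreatest_le j).lt_of_ne fun h => hj (h ▸ ha)
  have hjb : j < Nat.find hex := (Nat.find_spec hex).1.lt_of_ne fun h => hj (h ▸ hb)
  refine ⟨_, _, ha, hb, Nat.le_findGreatest hloj hlo, haj, hjb, Nat.find_min' hex ⟨hjhi, hhi⟩,
    fun m ham hmb hm => ?_⟩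
  rcases le_or_gt m j with hmj | hjm
  · exact Nat.findGreatest_is_greatest ham hmj hm
  · exact Nat.find_min hex hmb ⟨hjm.le, hm⟩

theorem Flip.symm {n : ℕ} {D D' : Finset (ℕ × ℕ)} (h : Flip n D D') : Flip n D' D := by
  obtain ⟨hD, hD', d, d', hd, hd', rfl⟩ := h
  have hd'e : d' ∉ D.erase d := fun h => hd' (Finset.mem_of_mem_erase h)
  refine ⟨hD', hD, d', d, Finset.mem_insert_self _ _, ?_, ?_⟩
  · simp only [Finset.mem_insert, Finset.mem_erase, ne_eq, not_true_eq_false, false_and,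
      or_false]
    rintro rfl
    exact hd' hd
  · rw [Finset.erase_insert hd'e, Finset.insert_erase hd]

instance (n : ℕ) : Std.Symm (Flip n) := ⟨fun _ _ => Flip.symm⟩

namespace IsTriangulation

variable {n : ℕ} {D : Finset (ℕ × ℕ)}

theorem not_crosses_of_isEdge (hD : IsTriangulation n D) {p s : ℕ × ℕ} (hp : p ∈ D)
    (hs : IsEdge n D s) : ¬Crosses p s :=
  _root_.not_crosses_of_isEdge (hD.1 p hp).2.1 (hD.2.1 p hp) hs

theorem flip_quadrilateral (hD : IsTriangulation n D) {i j k l : ℕ} (hij : i < j)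
    (hjk : j < k) (hkl : k < l) (hjl : (j, l) ∈ D) (h₁ : IsEdge n D (i, j))
    (h₂ : IsEdge n D (j, k)) (h₃ : IsEdge n D (k, l)) (h₄ : IsEdge n D (i, l)) :
    Flip n D (insert (i, k) (D.erase (j, l))) := by
  have hln : l < n := (hD.1 _ hjl).2.1
  have hcross : Crosses (i, k) (j, l) := Or.inl ⟨hij, hjk, hkl⟩
  have hik_nc : ∀ q ∈ D, q ≠ (j, l) → ¬Crosses q (i, k) := fun q hq hne h =>
    hne <| (eq_of_crosses_of_not_crosses_sides hij hjk hkl (hD.not_crosses_of_isEdge hq h₁)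
      (hD.not_crosses_of_isEdge hq h₂) (hD.not_crosses_of_isEdge hq h₃)
      (hD.not_crosses_of_isEdge hq h₄)).1 h
  refine ⟨hD, ⟨?_, ?_, ?_⟩, (j, l), (i, k), hjl, fun h => hD.2.1 _ h _ hjl hcross, rfl⟩
  · simp only [Finset.mem_insert, Finset.mem_erase]
    rintro p (rfl | ⟨-, hp⟩)
    exacts [⟨by omega, by omega, by omega⟩, hD.1 p hp]
  · simp only [Finset.mem_insert, Finset.mem_erase]
    rintro p (rfl | ⟨hp, hpD⟩) q (rfl | ⟨hq, hqD⟩)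
    · unfold Crosses
      omega
    · exact crosses_comm.not.mp (hik_nc q hqD hq)
    · exact hik_nc p hpD hp
    · exact hD.2.1 p hpD q hqD
  · intro p hp hp_nc
    have hside : ∀ {s}, IsEdge n D s → s ≠ (j, l) → ¬Crosses p s := fun hs hne =>
      _root_.not_crosses_of_isEdge hp.2.1 hp_nc (hs.insert_erase hne _)
    by_cases hpjl : Crosses p (j, l)
    · rw [(eq_of_crosses_of_not_crosses_sides hij hjk hkl
        (hside h₁ (by simp; omega)) (hside h₂ (by simp; omega))
        (hside h₃ (by simp; omega)) (hside h₄ (by simp; omega))).2 hpjl]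
      exact Finset.mem_insert_self _ _
    · have hpD : p ∈ D := hD.2.2 p hp fun q hq => by
        by_cases hq' : q = (j, l)
        · exact hq' ▸ hpjl
        · exact hp_nc q (Finset.mem_insert_of_mem (Finset.mem_erase.mpr ⟨hq', hq⟩))
      have hne : p ≠ (j, l) := by
        rintro rfl
        exact hp_nc _ (Finset.mem_insert_self _ _) (crosses_comm.mp hcross)
      exact Finset.mem_insert_of_mem (Finset.mem_erase.mpr ⟨hne, hpD⟩)

theorem mem_of_consecutive_neighbors (hD : IsTriangulation n D) {i a b : ℕ} (hia : i < a)
    (hab : a + 2 ≤ b) (hbn : b < n) (ha : IsEdge n D (i, a)) (hb : IsEdge n D (i, b))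
    (hgap : ∀ m, a < m → m < b → (i, m) ∉ D) : (a, b) ∈ D := by
  refine hD.2.2 _ ⟨hab, hbn, by omega⟩ fun ⟨u, v⟩ huv h => ?_
  have hna := hD.not_crosses_of_isEdge huv ha
  have hnb := hD.not_crosses_of_isEdge huv hb
  by_cases hv : u = i ∧ a < v ∧ v < b
  · obtain ⟨rfl, hav, hvb⟩ := hv
    exact hgap v hav hvb huv
  · simp only [Crosses] at h hna hnb
    omega

theorem exists_apex (hD : IsTriangulation n D) {a b : ℕ} (hab : a + 2 ≤ b) (hbn : b < n)
    (h : IsEdge n D (a, b)) :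
    ∃ c, a < c ∧ c < b ∧ IsEdge n D (a, c) ∧ IsEdge n D (c, b) := by
  classical
  have hex : ∃ c, a < c ∧ IsEdge n D (c, b) := ⟨b - 1, by omega, Or.inr (Or.inl (by simp; omega))⟩
  set c := Nat.find hex
  obtain ⟨hac, hcb⟩ : a < c ∧ IsEdge n D (c, b) := Nat.find_spec hex
  have hc_lt : c < b := by
    by_contra! hbc
    have := Nat.find_min' hex (m := b - 1) ⟨by omega, Or.inr (Or.inl (by simp; omega))⟩
    omega
  refine ⟨c, hac, hc_lt, ?_, hcb⟩
  rcases Nat.lt_or_ge (a + 1) c with hac2 | hac1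
  · refine Or.inl (hD.2.2 _ ⟨hac2, by omega, by omega⟩ fun ⟨u, v⟩ huv hx => ?_)
    have hnab := hD.not_crosses_of_isEdge huv h
    have hncb := hD.not_crosses_of_isEdge huv hcb
    by_cases hv : v = b ∧ a < u ∧ u < c
    · obtain ⟨rfl, hau, huc⟩ := hv
      exact Nat.find_min hex huc ⟨hau, Or.inl huv⟩
    · simp only [Crosses] at hx hnab hncb
      omega
  · exact Or.inr (Or.inl (by simp only; omega))

theorem eq_fan (hD : IsTriangulation n D) (h : ∀ p ∈ D, p.1 = 0) : D = fan n := by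
  ext ⟨u, v⟩
  simp only [fan, Finset.mem_image, Finset.mem_Ico, Prod.mk.injEq]
  constructor
  · intro huv
    obtain ⟨h₁, h₂, h₃⟩ := hD.1 _ huv
    have hu : u = 0 := h _ huv
    exact ⟨v, ⟨by simp only at *; omega, by simp only at *; omega⟩, hu.symm, rfl⟩
  · rintro ⟨j, ⟨hj₁, hj₂⟩, rfl, rfl⟩
    refine hD.2.2 _ ⟨by omega, by omega, by simp only; omega⟩ fun ⟨w, z⟩ hwz hx => ?_
    have hw : w = 0 := h _ hwz
    simp only [Crosses] at hx
    omega

theorem exists_flip_card_lt (hD : IsTriangulation n D) {x y : ℕ} (hxy : (x, y) ∈ D)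
    (hx : x ≠ 0) :
    ∃ D', Flip n D D' ∧ (D'.filter fun p => p.1 ≠ 0).card < (D.filter fun p => p.1 ≠ 0).card := by
  classical
  obtain ⟨hxy₂, hyn, -⟩ := hD.1 _ hxy
  simp only at hxy₂ hyn
  have hj : ¬IsEdge n D (0, x + 1) := by
    rintro (h | h | h)
    · exact hD.2.1 _ hxy _ h (Or.inr ⟨by omega, by omega, by omega⟩)
    · exact hx (by simpa using h)
    · simp only [Prod.mk.injEq] at h
      omega
  obtain ⟨a, b, ha, hb, ha₁, hax, hxb, hbn, hgap⟩ :=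
    exists_consecutive_around (P := fun m => IsEdge n D (0, m)) (lo := 1) (hi := n - 1)
      (Or.inr (Or.inl rfl)) (Or.inr (Or.inr rfl)) (by omega) (by omega) hj
  have hab : (a, b) ∈ D := hD.mem_of_consecutive_neighbors (by omega) (by omega) (by omega)
    ha hb fun m ham hmb hm => hgap m ham hmb (Or.inl hm)
  obtain ⟨c, hac, hcb, hac', hcb'⟩ := hD.exists_apex (by omega) (by omega) (Or.inl hab)
  refine ⟨_, hD.flip_quadrilateral (by omega) hac hcb hab ha hac' hcb' hb, ?_⟩
  rw [Finset.filter_insert, if_neg (by simp), Finset.filter_erase]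
  exact Finset.card_erase_lt_of_mem (Finset.mem_filter.mpr ⟨hab, by simp only; omega⟩)

theorem reflTransGen_flip_fan (hD : IsTriangulation n D) :
    Relation.ReflTransGen (Flip n) D (fan n) := by
  induction hm : (D.filter fun p => p.1 ≠ 0).card using Nat.strong_induction_on
    generalizing D with
  | _ m ih =>
    by_cases hall : ∀ p ∈ D, p.1 = 0
    · rw [hD.eq_fan hall]
    · simp only [not_forall] at hall
      obtain ⟨⟨x, y⟩, hxy, hx⟩ := hall
      obtain ⟨D', hflip, hlt⟩ := hD.exists_flip_card_lt hxy hx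
      exact .head hflip (ih _ (hm ▸ hlt) hflip.2.1 rfl)

end IsTriangulation

/-- Wagner: any two triangulations of a convex polygon (using no
additional vertices) are connected by a finite sequence of diagonal flips. -/
theorem triangulations_flip_connected (n : ℕ) (D D' : Finset (ℕ × ℕ))
    (hD : IsTriangulation n D) (hD' : IsTriangulation n D') :
    Relation.ReflTransGen (Flip n) D D' :=
  hD.reflTransGen_flip_fan.trans (Std.Symm.symm _ _ hD'.reflTransGen_flip_fan)
end

section
/- With b_n := 2·f_n^3 − ẽ_n^2 where f_n^3 = binomial(n,3) 2^{n-3} and ẽ_n^2 = (χ(C_n^{(2)}) − 1) = f_n^0 − f_n^1 + f_n^2 − 1, the generating function Σ_{n≥0} b_n x^n equals x^3 / ((1−x)(1−2x)^4), and moreover b_n = ẽ_{n+1}^3 for all n ≥ 0, where ẽ_{n+1}^3 = −(χ(C_{n+1}^{(3)}) − 1) = −(f_{n+1}^0 − f_{n+1}^1 + f_{n+1}^2 − f_{n+1}^3 − 1). -/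
/-- `f_n^k = C(n,k)·2^{n-k}`, the number of `k`-faces of the `n`-cube. -/
def cubeF (n k : ℕ) : ℤ := (n.choose k * 2 ^ (n - k) : ℕ)

/-- `ẽ_n^k = (-1)^k (Σ_{j=0}^k (-1)^j f_n^j - 1)`, the suitably signed reduced Euler
characteristic of the `k`-skeleton of the `n`-cube. -/
def etilde (n k : ℕ) : ℤ :=
  (-1) ^ k * ((∑ j ∈ Finset.range (k + 1), (-1) ^ j * cubeF n j) - 1)

/-- `b_n = 2·f_n^3 − ẽ_n^2`. -/
def bSeq (n : ℕ) : ℤ := 2 * cubeF n 3 - etilde n 2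

/-!
A `(k+1)`-face of the `(n+1)`-cube `[0,1]^n × [0,1]` is a `(k+1)`-face of `[0,1]^n` times an
endpoint or a `k`-face of `[0,1]^n` times `[0,1]`, so `f_{n+1}^{k+1} = 2 f_n^{k+1} + f_n^k`.
In generating functions this says `Σ_n f_n^k xⁿ = x^k / (1 - 2x)^(k+1)`, and `b_n` is an explicit
combination of `f_n^0, …, f_n^3` and `1`, whence its generating function. In the alternating sums
defining `ẽ` the recurrence telescopes to `ẽ_{n+1}^{k+1} = 2 f_n^{k+1} - ẽ_n^k`, which for `k = 2`
is `ẽ_{n+1}^3 = b_n`.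
-/

theorem cubeF_succ_zero (n : ℕ) : cubeF (n + 1) 0 = 2 * cubeF n 0 := by
  simp [cubeF, pow_succ, mul_comm]

theorem cubeF_zero_succ (k : ℕ) : cubeF 0 (k + 1) = 0 := by
  simp [cubeF]

theorem cubeF_succ_succ (n k : ℕ) :
    cubeF (n + 1) (k + 1) = 2 * cubeF n (k + 1) + cubeF n k := by
  rcases lt_or_ge n k with h | h
  · simp [cubeF, Nat.choose_eq_zero_of_lt, h, Nat.lt_succ_of_lt h]
  obtain ⟨_ | d, rfl⟩ := Nat.exists_eq_add_of_le h
  · simp [cubeF]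
  · simp only [cubeF, Nat.choose_succ_succ', show k + (d + 1) + 1 - (k + 1) = d + 1 by omega,
      show k + (d + 1) - k = d + 1 by omega, show k + (d + 1) - (k + 1) = d by omega]
    push_cast
    ring

theorem sum_range_succ_alternating_cubeF_succ (n m : ℕ) :
    ∑ j ∈ Finset.range (m + 1), (-1) ^ j * cubeF (n + 1) j
      = 2 * ∑ j ∈ Finset.range (m + 1), (-1) ^ j * cubeF n j
        - ∑ j ∈ Finset.range m, (-1) ^ j * cubeF n j := by
  induction m with
  | zero => simp [cubeF_succ_zero]
  | succ m ih =>
    rw [Finset.sum_range_succ, ih, cubeF_succ_succ, Finset.sum_range_succ _ (m + 1),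
      Finset.sum_range_succ _ m]
    ring

theorem etilde_succ_succ (n k : ℕ) :
    etilde (n + 1) (k + 1) = 2 * cubeF n (k + 1) - etilde n k := by
  have hsign : ((-1 : ℤ) ^ (k + 1)) * (-1) ^ (k + 1) = 1 := by
    rw [← mul_pow]
    simp
  rw [etilde, etilde, sum_range_succ_alternating_cubeF_succ, Finset.sum_range_succ _ (k + 1)]
  linear_combination 2 * cubeF n (k + 1) * hsign

theorem bSeq_eq_alternating_cubeF (n : ℕ) :
    bSeq n = 2 * cubeF n 3 - cubeF n 2 + cubeF n 1 - cubeF n 0 + 1 := by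
  simp only [bSeq, etilde, Finset.sum_range_succ, Finset.sum_range_zero]
  ring

open PowerSeries

section CubeFSeries

variable (R : Type*) [CommRing R]

def cubeFSeries (k : ℕ) : R⟦X⟧ := mk fun n => (cubeF n k : R)

theorem one_sub_two_X_mul_cubeFSeries_zero : (1 - 2 * X) * cubeFSeries R 0 = 1 := by
  ext (_ | n)
  · simp [cubeFSeries, cubeF]
  · rw [sub_mul, mul_right_comm, map_sub, coeff_succ_mul_X, ← map_ofNat C 2, coeff_C_mul]
    simp [cubeFSeries, cubeF_succ_zero]

theorem one_sub_two_X_mul_cubeFSeries_succ (k : ℕ) :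
    (1 - 2 * X) * cubeFSeries R (k + 1) = X * cubeFSeries R k := by
  ext (_ | n)
  · simp [cubeFSeries, cubeF_zero_succ]
  · rw [sub_mul, mul_right_comm, map_sub, coeff_succ_mul_X, ← map_ofNat C 2, coeff_C_mul,
      coeff_succ_X_mul]
    simp [cubeFSeries, cubeF_succ_succ]

theorem one_sub_two_X_pow_mul_cubeFSeries (k : ℕ) :
    (1 - 2 * X) ^ (k + 1) * cubeFSeries R k = X ^ k := by
  induction k with
  | zero => simpa using one_sub_two_X_mul_cubeFSeries_zero R
  | succ k ih =>
    rw [pow_succ, mul_assoc, one_sub_two_X_mul_cubeFSeries_succ, mul_left_comm, ih, pow_succ']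

end CubeFSeries

/-- the generating function `Σ_{n≥0} b_n xⁿ` equals
`x³ / ((1−x)(1−2x)⁴)` in `ℚ[[x]]` (stated with cleared denominators), and moreover
`b_n = ẽ_{n+1}^3` for all `n ≥ 0`. -/
theorem bSeq_generating_function :
    ((1 - X) * (1 - 2 * X) ^ 4 * PowerSeries.mk (fun n => (bSeq n : ℚ))
      = (X : PowerSeries ℚ) ^ 3) ∧
    (∀ n : ℕ, bSeq n = etilde (n + 1) 3) := by
  refine ⟨?_, fun n => (etilde_succ_succ n 2).symm⟩
  have hseries : PowerSeries.mk (fun n => (bSeq n : ℚ)) = 2 * cubeFSeries ℚ 3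
      - cubeFSeries ℚ 2 + cubeFSeries ℚ 1 - cubeFSeries ℚ 0 + mk 1 := by
    ext n
    simp [cubeFSeries, bSeq_eq_alternating_cubeF, two_mul]
  have h := one_sub_two_X_pow_mul_cubeFSeries ℚ
  rw [hseries]
  linear_combination 2 * (1 - X) * h 3 - (1 - X) * (1 - 2 * X) * h 2
    + (1 - X) * (1 - 2 * X) ^ 2 * h 1 - (1 - X) * (1 - 2 * X) ^ 3 * h 0
    + (1 - 2 * X) ^ 4 * mk_one_mul_one_sub_eq_one ℚ
end
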